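/- arXiv:1008.2292 — 9 statements merged into one kernel-verified Lean document; each statement's English description precedes it below -/
import Mathlib

section
/- For any t_1, …, t_d ∈ [0,∞) one has E[exp(−∑_{i=1}^d J_{t_i})] ≥ ∏_{i=1}^d E[exp(−J_{t_i})]; equivalently, the dependence function ∏_{i=1}^d ψ_{J_{t_{(i)}} − J_{t_{(i−1)}}}(d−i+1) / ψ_{J_{t_{(i)}}}(1) is at least 1, where t_{(1)} ≤ … ≤ t_{(d)} are the increasing order statistics of t_1, …, t_d and t_{(0)} := 0. -/
/-!
Sort the times increasingly, `u₁ ≤ ⋯ ≤ u_d`, and write `J_{uᵢ} = Δ₁ + ⋯ + Δᵢ` with independent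
nonnegative increments `Δⱼ = J_{uⱼ} - J_{uⱼ₋₁}`. Then `∑ᵢ J_{uᵢ} = ∑ⱼ (d - j + 1) Δⱼ`, so by
independence both sides factor over the increments, and the inequality reduces to
`E[e^{-Δ}]^k ≤ E[e^{-kΔ}]`, which is Jensen's inequality for `x ↦ x^k`.
-/

open MeasureTheory ProbabilityTheory Finset

@[to_additive]
lemma Finset.prod_prod_Iic_eq_prod_pow {α M : Type*} [Fintype α] [Preorder α]
    [LocallyFiniteOrderBot α] [LocallyFiniteOrderTop α] [CommMonoid M] (f : α → M) :
    ∏ i, ∏ j ∈ Iic i, f j = ∏ j, f j ^ #(Ici j) := by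
  rw [prod_comm' (t' := univ) (s' := Ici) (by simp)]
  simp only [prod_const]

lemma Fin.monotone_cons {n : ℕ} {α : Type*} [Preorder α] {a : α} {f : Fin n → α}
    (ha : ∀ i, a ≤ f i) (hf : Monotone f) : Monotone (Fin.cons a f : Fin (n + 1) → α) := by
  intro i j hij
  cases i using Fin.cases <;> cases j using Fin.cases
  · exact le_rfl
  · exact ha _
  · exact absurd hij (Fin.succ_pos _).not_ge
  · exact hf (Fin.succ_le_succ_iff.1 hij)

section LaplaceTransform

variable {Ω : Type*} [MeasurableSpace Ω] {P : Measure Ω}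

lemma ProbabilityTheory.iIndepFun.integral_exp_neg_sum {ι : Type*} {X : ι → Ω → ℝ}
    (hX : iIndepFun X P) (hmeas : ∀ i, Measurable (X i)) (s : Finset ι) :
    ∫ ω, Real.exp (-∑ i ∈ s, X i ω) ∂P = ∏ i ∈ s, ∫ ω, Real.exp (-X i ω) ∂P := by
  simpa [mgf, Finset.sum_apply] using hX.mgf_sum hmeas s (t := -1)

lemma pow_integral_exp_neg_le [IsProbabilityMeasure P] {X : Ω → ℝ} (hX : Measurable X)
    (hX0 : 0 ≤ X) (k : ℕ) :
    (∫ ω, Real.exp (-X ω) ∂P) ^ k ≤ ∫ ω, Real.exp (-(k * X ω)) ∂P := by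
  have hbound : ∀ ω, ‖Real.exp (-X ω)‖ ≤ 1 := fun ω => by
    simpa [Real.abs_exp] using hX0 ω
  have hint : Integrable (fun ω => Real.exp (-X ω)) P :=
    .of_bound (hX.neg.exp.aestronglyMeasurable) 1 (.of_forall hbound)
  have hint_pow : Integrable (fun ω => Real.exp (-X ω) ^ k) P :=
    .of_bound ((hX.neg.exp.pow_const k).aestronglyMeasurable) 1
      (.of_forall fun ω => by simpa [norm_pow] using pow_le_one₀ (norm_nonneg _) (hbound ω))
  calc (∫ ω, Real.exp (-X ω) ∂P) ^ k
      ≤ ∫ ω, Real.exp (-X ω) ^ k ∂P :=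
        (convexOn_pow k).map_integral_le (continuous_pow k).continuousOn isClosed_Ici
          (.of_forall fun ω => (Real.exp_pos _).le) hint hint_pow
    _ = ∫ ω, Real.exp (-(k * X ω)) ∂P := by
        simp_rw [← Real.exp_nat_mul, mul_neg]

end LaplaceTransform

section IndependentIncrements

variable {Ω : Type*} [MeasurableSpace Ω] {P : Measure Ω} [IsProbabilityMeasure P]
  {J : NNReal → Ω → ℝ}

lemma prod_integral_exp_neg_le_integral_exp_neg_sum_of_monotone
    (hJmeas : ∀ t, Measurable (J t)) (hJ0 : ∀ ω, J 0 ω = 0)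
    (hJmono : ∀ ω, Monotone (fun t => J t ω))
    (hJindep : ∀ (n : ℕ) (s : Fin (n + 1) → NNReal), Monotone s → s 0 = 0 →
      iIndepFun (fun i : Fin n => fun ω => J (s i.succ) ω - J (s i.castSucc) ω) P)
    {d : ℕ} {u : Fin d → NNReal} (hu : Monotone u) :
    ∏ i, ∫ ω, Real.exp (-J (u i) ω) ∂P ≤ ∫ ω, Real.exp (-∑ i, J (u i) ω) ∂P := by
  set s : Fin (d + 1) → NNReal := Fin.cons 0 u
  have hs : Monotone s := Fin.monotone_cons (fun _ => zero_le) hu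
  set Δ : Fin d → Ω → ℝ := fun j ω => J (s j.succ) ω - J (s j.castSucc) ω
  have hΔmeas : ∀ j, Measurable (Δ j) := fun j => (hJmeas _).sub (hJmeas _)
  have hΔnonneg : ∀ j, 0 ≤ Δ j := fun j ω => sub_nonneg.2 (hJmono ω (hs j.castSucc_le_succ))
  have hΔindep : iIndepFun Δ P := hJindep d s hs rfl
  have htelescope : ∀ i ω, J (u i) ω = ∑ j ∈ Iic i, Δ j ω := fun i ω => by
    have h := Fin.sum_Iic_sub i (fun k => J (s k) ω)
    simp only [s, Fin.cons_succ, Fin.cons_zero, hJ0, sub_zero] at h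
    exact h.symm
  have hweighted : iIndepFun (fun j ω => (#(Ici j) : ℝ) * Δ j ω) P :=
    hΔindep.comp _ fun j => measurable_const_mul _
  calc ∏ i, ∫ ω, Real.exp (-J (u i) ω) ∂P
      = ∏ i, ∏ j ∈ Iic i, ∫ ω, Real.exp (-Δ j ω) ∂P := by
        simp_rw [htelescope, hΔindep.integral_exp_neg_sum hΔmeas]
    _ = ∏ j, (∫ ω, Real.exp (-Δ j ω) ∂P) ^ #(Ici j) := prod_prod_Iic_eq_prod_pow _
    _ ≤ ∏ j, ∫ ω, Real.exp (-(#(Ici j) * Δ j ω)) ∂P :=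
        prod_le_prod (fun _ _ => pow_nonneg (integral_nonneg fun _ => (Real.exp_pos _).le) _)
          fun j _ => pow_integral_exp_neg_le (hΔmeas j) (hΔnonneg j) _
    _ = ∫ ω, Real.exp (-∑ j, #(Ici j) * Δ j ω) ∂P :=
        (hweighted.integral_exp_neg_sum (fun j => (hΔmeas j).const_mul _) _).symm
    _ = ∫ ω, Real.exp (-∑ i, J (u i) ω) ∂P := by
        simp_rw [htelescope, sum_sum_Iic_eq_sum_nsmul, nsmul_eq_mul]

end IndependentIncrements

theorem expectation_exp_neg_sum_ge_prod_general
    {Ω : Type*} [MeasurableSpace Ω] (P : Measure Ω) [IsProbabilityMeasure P]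
    (J : NNReal → Ω → ℝ)
    (hJmeas : ∀ t, Measurable (J t))
    (hJ0 : ∀ ω, J 0 ω = 0)
    (hJmono : ∀ ω, Monotone (fun t => J t ω))
    (hJindep : ∀ (n : ℕ) (s : Fin (n + 1) → NNReal), Monotone s → s 0 = 0 →
      iIndepFun
        (fun i : Fin n => fun ω => J (s i.succ) ω - J (s i.castSucc) ω) P)
    (d : ℕ) (t : Fin d → NNReal) :
    ∫ ω, Real.exp (-∑ i : Fin d, J (t i) ω) ∂P
      ≥ ∏ i : Fin d, ∫ ω, Real.exp (-J (t i) ω) ∂P := by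
  have hsorted := prod_integral_exp_neg_le_integral_exp_neg_sum_of_monotone (P := P) hJmeas hJ0 hJmono hJindep
    (Tuple.monotone_sort t)
  have hsum (ω : Ω) : ∑ i, J (t (Tuple.sort t i)) ω = ∑ i, J (t i) ω :=
    Equiv.sum_comp (Tuple.sort t) fun i => J (t i) ω
  simpa only [Function.comp_apply, hsum,
    Equiv.prod_comp (Tuple.sort t) fun i => ∫ ω, Real.exp (-J (t i) ω) ∂P] using hsorted

/-- Let `J = (J_t)_{t ≥ 0}` be a nonnegative stochastic process with `J_0 = 0`,
nondecreasing right-continuous sample paths, and independent increments.  For any times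
`t_1, …, t_d ≥ 0`,
`E[exp(−∑_{i=1}^d J_{t_i})] ≥ ∏_{i=1}^d E[exp(−J_{t_i})]`,
i.e. the dependence function of the Sibuya copula is at least `1`. -/
theorem expectation_exp_neg_sum_ge_prod
    {Ω : Type*} [MeasurableSpace Ω] (P : Measure Ω) [IsProbabilityMeasure P]
    (J : NNReal → Ω → ℝ)
    (hJmeas : ∀ t, Measurable (J t))
    (hJ0 : ∀ ω, J 0 ω = 0)
    (hJnonneg : ∀ t ω, 0 ≤ J t ω)
    (hJmono : ∀ ω, Monotone (fun t => J t ω))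
    (hJrc : ∀ ω t, ContinuousWithinAt (fun s => J s ω) (Set.Ici t) t)
    (hJindep : ∀ (n : ℕ) (s : Fin (n + 1) → NNReal), Monotone s → s 0 = 0 →
      iIndepFun
        (fun i : Fin n => fun ω => J (s i.succ) ω - J (s i.castSucc) ω) P)
    (d : ℕ) (t : Fin d → NNReal) :
    ∫ ω, Real.exp (-∑ i : Fin d, J (t i) ω) ∂P
      ≥ ∏ i : Fin d, ∫ ω, Real.exp (-J (t i) ω) ∂P :=
  expectation_exp_neg_sum_ge_prod_general P J hJmeas hJ0 hJmono hJindep d t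
end

section
/- Define the jointure function φ(x, y, z) := exp(−z(1 − e^{−xy} − x(1 − e^{−y}))) for x, y, z ∈ [0,∞). For every u ∈ (0,1]^d, writing w_j := −(λ/λ_j) log u_j with increasing order statistics w_{(1)} ≤ … ≤ w_{(d)} and w_{(0)} := 0, one has ∏_{i=1}^d u_i · φ(d − i + 1, H, w_{(i)} − w_{(i−1)}) = ∏_{i=1}^d u_i · v_{(i)}^{(1−e^{−H})(1−e^{−H(d−i)})} = C(u). -/
open scoped BigOperators

/-- The Sibuya copula under assumption (A) with parameters `H`, `lam = λ`, `μ₁, …, μ_d`: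
`C(u) = ∏_{i=1}^d u_i · v_{(i)}^{(1−e^{−H})(1−e^{−H(d−i)})}`, where `v_j = u_j^{−λ/λ_j}`,
`λ_j = μ_j + λ(1 − e^{−H})`, and `v_{(1)} ≤ … ≤ v_{(d)}` are the increasing order
statistics of `v_1, …, v_d` (obtained via the sorting permutation `Tuple.sort v`). -/
noncomputable def sibuyaA (d : ℕ) (H lam : ℝ) (μ : Fin d → ℝ) (u : Fin d → ℝ) : ℝ :=
  let v : Fin d → ℝ := fun j => u j ^ (-lam / (μ j + lam * (1 - Real.exp (-H))))
  ∏ i : Fin d,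
    u i * v (Tuple.sort v i)
      ^ ((1 - Real.exp (-H)) * (1 - Real.exp (-(((d - 1 - (i : ℕ) : ℕ)) : ℝ) * H)))

/-- The jointure function `φ(x, y, z) = exp(−z(1 − e^{−xy} − x(1 − e^{−y})))`. -/
noncomputable def jointure (x y z : ℝ) : ℝ :=
  Real.exp (-z * (1 - Real.exp (-(x * y)) - x * (1 - Real.exp (-y))))

/-!
Each factor `φ(d − i + 1, H, w_{(i)} − w_{(i−1)})` is `exp(−(w_{(i)} − w_{(i−1)}) r(d − i + 1))`
with `r(x) = 1 − e^{−xH} − x(1 − e^{−H})`. Summation by parts moves the differences from `w`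
onto `r`, the boundary terms vanishing because `w_{(0)} = 0` and `r(0) = 0`, and
`r(x) − r(x + 1) = (1 − e^{−H})(1 − e^{−xH})`. Since `v_j = e^{w_j}`, this yields the product
of the `v_{(i)}^{(1−e^{−H})(1−e^{−H(d−i)})}`; finally `σ` sorts `v` because it sorts `w`.
-/

open Real

namespace Fin

theorem sum_succ_sub_sum_castSucc {M : Type*} [AddCommGroup M] {n : ℕ} (f : Fin (n + 1) → M) :
    ∑ i : Fin n, f i.succ - ∑ i : Fin n, f i.castSucc = f (last n) - f 0 := by
  rw [sub_eq_sub_iff_add_eq_add, add_comm _ (f 0), ← sum_univ_succ, sum_univ_castSucc, add_comm]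

theorem sum_sub_mul_castSucc_add_sum_mul_sub {R : Type*} [CommRing R] {n : ℕ}
    (W a : Fin (n + 1) → R) :
    ∑ i : Fin n, (W i.succ - W i.castSucc) * a i.castSucc
        + ∑ i : Fin n, W i.succ * (a i.succ - a i.castSucc)
      = W (last n) * a (last n) - W 0 * a 0 := by
  rw [← sum_succ_sub_sum_castSucc (fun j => W j * a j), ← Finset.sum_add_distrib,
    ← Finset.sum_sub_distrib]
  exact Finset.sum_congr rfl fun i _ => by ring

end Fin

noncomputable def jointureRate (x y : ℝ) : ℝ :=
  1 - exp (-(x * y)) - x * (1 - exp (-y))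

theorem jointure_eq_exp_jointureRate (x y z : ℝ) :
    jointure x y z = exp (-z * jointureRate x y) := rfl

@[simp]
theorem jointureRate_zero (y : ℝ) : jointureRate 0 y = 0 := by
  simp [jointureRate]

theorem jointureRate_sub_jointureRate_add_one (x y : ℝ) :
    jointureRate x y - jointureRate (x + 1) y = (1 - exp (-y)) * (1 - exp (-x * y)) := by
  have h : exp (-((x + 1) * y)) = exp (-x * y) * exp (-y) := by
    rw [← exp_add]; ring_nf
  simp only [jointureRate, h, neg_mul]
  ring

theorem prod_jointure_eq_prod_exp_rpow {d : ℕ} (y : ℝ) (W : Fin (d + 1) → ℝ) (hW0 : W 0 = 0) :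
    ∏ i : Fin d, jointure ((d - (i : ℕ) : ℕ) : ℝ) y (W i.succ - W i.castSucc)
      = ∏ i : Fin d, exp (W i.succ)
          ^ ((1 - exp (-y)) * (1 - exp (-(((d - 1 - (i : ℕ) : ℕ)) : ℝ) * y))) := by
  set r : Fin (d + 1) → ℝ := fun j => jointureRate ((d - (j : ℕ) : ℕ) : ℝ) y
  set c : Fin d → ℝ := fun i => (1 - exp (-y)) * (1 - exp (-(((d - 1 - (i : ℕ) : ℕ)) : ℝ) * y))
  have hr : ∀ i : Fin d, r i.succ - r i.castSucc = c i := by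
    intro i
    have hcast : ((d - (i : ℕ) : ℕ) : ℝ) = ((d - 1 - (i : ℕ) : ℕ) : ℝ) + 1 := by
      norm_cast; omega
    simp only [r, c, Fin.val_castSucc, Fin.val_succ, hcast,
      show d - ((i : ℕ) + 1) = d - 1 - i by omega]
    exact jointureRate_sub_jointureRate_add_one _ y
  have hr_last : r (Fin.last d) = 0 := by simp [r]
  have hparts := Fin.sum_sub_mul_castSucc_add_sum_mul_sub W r
  rw [hr_last, hW0, mul_zero, zero_mul, sub_zero] at hparts
  simp only [hr] at hparts
  simp_rw [jointure_eq_exp_jointureRate, rpow_def_of_pos (exp_pos _), log_exp, ← exp_sum]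
  show exp (∑ i : Fin d, -(W i.succ - W i.castSucc) * r i.castSucc)
    = exp (∑ i : Fin d, W i.succ * c i)
  simp only [neg_mul, Finset.sum_neg_distrib]
  congr 1
  linear_combination -hparts

theorem sibuyaA_eq_prod_jointure_general
    (d : ℕ) (H lam : ℝ)
    (μ : Fin d → ℝ)
    (u : Fin d → ℝ) (hu : ∀ i, 0 < u i ∧ u i ≤ 1)
    (w : Fin d → ℝ)
    (hw : ∀ j, w j = -(lam / (μ j + lam * (1 - Real.exp (-H)))) * Real.log (u j))
    (σ : Equiv.Perm (Fin d)) (hσ : Monotone (w ∘ σ))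
    (W : Fin (d + 1) → ℝ) (hW0 : W 0 = 0) (hWσ : ∀ k : Fin d, W k.succ = w (σ k)) :
    (∏ i : Fin d,
        u i * jointure ((d - (i : ℕ) : ℕ) : ℝ) H (W i.succ - W i.castSucc))
      = (∏ i : Fin d,
          u i * (u (σ i) ^ (-lam / (μ (σ i) + lam * (1 - Real.exp (-H)))))
            ^ ((1 - Real.exp (-H)) * (1 - Real.exp (-(((d - 1 - (i : ℕ) : ℕ)) : ℝ) * H))))
    ∧ (∏ i : Fin d,
          u i * (u (σ i) ^ (-lam / (μ (σ i) + lam * (1 - Real.exp (-H)))))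
            ^ ((1 - Real.exp (-H)) * (1 - Real.exp (-(((d - 1 - (i : ℕ) : ℕ)) : ℝ) * H))))
        = sibuyaA d H lam μ u := by
  set v : Fin d → ℝ := fun j => u j ^ (-lam / (μ j + lam * (1 - exp (-H))))
  have hv : ∀ j, v j = exp (w j) := fun j => by
    show u j ^ _ = _
    rw [rpow_def_of_pos (hu j).1, hw j, neg_div, mul_comm]
  have hsort : v ∘ σ = v ∘ Tuple.sort v := Tuple.comp_sort_eq_comp_iff_monotone.mpr <| by
    simpa only [Function.comp_def, hv] using exp_monotone.comp hσ
  constructor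
  · rw [Finset.prod_mul_distrib, Finset.prod_mul_distrib, prod_jointure_eq_prod_exp_rpow H W hW0]
    simp only [hWσ, ← hv]
    rfl
  · exact Finset.prod_congr rfl fun i _ => congrArg (fun t => u i * t ^ _) (congrFun hsort i)

/-- For `u ∈ (0,1]^d`, writing `w_j = −(λ/λ_j) log u_j` with increasing order
statistics `W 1 ≤ … ≤ W d` (convention `W 0 = w_{(0)} := 0`, recorded via a sorting
permutation `σ`), one has
`∏_{i=1}^d u_i · φ(d − i + 1, H, w_{(i)} − w_{(i−1)})
  = ∏_{i=1}^d u_i · v_{(i)}^{(1−e^{−H})(1−e^{−H(d−i)})} = C(u)`,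
where `v_j = u_j^{−λ/λ_j}` (note that `σ` also sorts `v`, since `v_j = exp w_j`). -/
theorem sibuyaA_eq_prod_jointure
    (d : ℕ) (hd : 2 ≤ d) (H lam : ℝ) (hH : 0 < H) (hlam : 0 < lam)
    (μ : Fin d → ℝ) (hμ : ∀ i, 0 ≤ μ i)
    (u : Fin d → ℝ) (hu : ∀ i, 0 < u i ∧ u i ≤ 1)
    (w : Fin d → ℝ)
    (hw : ∀ j, w j = -(lam / (μ j + lam * (1 - Real.exp (-H)))) * Real.log (u j))
    (σ : Equiv.Perm (Fin d)) (hσ : Monotone (w ∘ σ))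
    (W : Fin (d + 1) → ℝ) (hW0 : W 0 = 0) (hWσ : ∀ k : Fin d, W k.succ = w (σ k)) :
    (∏ i : Fin d,
        u i * jointure ((d - (i : ℕ) : ℕ) : ℝ) H (W i.succ - W i.castSucc))
      = (∏ i : Fin d,
          u i * (u (σ i) ^ (-lam / (μ (σ i) + lam * (1 - Real.exp (-H)))))
            ^ ((1 - Real.exp (-H)) * (1 - Real.exp (-(((d - 1 - (i : ℕ) : ℕ)) : ℝ) * H))))
    ∧ (∏ i : Fin d,
          u i * (u (σ i) ^ (-lam / (μ (σ i) + lam * (1 - Real.exp (-H)))))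
            ^ ((1 - Real.exp (-H)) * (1 - Real.exp (-(((d - 1 - (i : ℕ) : ℕ)) : ℝ) * H))))
        = sibuyaA d H lam μ u :=
  sibuyaA_eq_prod_jointure_general d H lam μ u hu w hw σ hσ W hW0 hWσ
end

section
/- For every u ∈ (0,1], the diagonal of the Sibuya copula under assumption (A) satisfies C(u, …, u) = u^{d − λ(1−e^{−H}) ∑_{i=1}^d (1 − e^{−H(d−i)})/λ_{[i]}}, where λ_{[i]} denotes the i-th largest value among λ_1, …, λ_d. -/
open scoped BigOperators

/-!
On the diagonal `u_j = u` the order statistics of `v_j = u^{-λ/λ_j}` are known in advance: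
for `u ∈ (0,1]` the map `r ↦ u^{-λ/r}` is antitone on `r > 0`, so listing the `λ_j` in
decreasing order lists the `v_j` in increasing order. Hence `v_{(i)} = u^{-λ/λ_{[i]}}`, every
factor of the copula is a power of `u`, and the exponents add up.
-/

open Real

lemma Tuple.sort_apply_eq_of_monotone {n : ℕ} {α : Type*} [LinearOrder α] (f : Fin n → α)
    {σ : Equiv.Perm (Fin n)} (hσ : Monotone (f ∘ σ)) (i : Fin n) :
    f (Tuple.sort f i) = f (σ i) :=
  (congrFun (Tuple.comp_sort_eq_comp_iff_monotone.mpr hσ) i).symm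

lemma sibuyaA_eq_prod_of_monotone {d : ℕ} (H lam : ℝ) (μ u : Fin d → ℝ)
    {σ : Equiv.Perm (Fin d)}
    (hσ : Monotone ((fun j => u j ^ (-lam / (μ j + lam * (1 - exp (-H))))) ∘ σ)) :
    sibuyaA d H lam μ u = ∏ i : Fin d,
      u i * (u (σ i) ^ (-lam / (μ (σ i) + lam * (1 - exp (-H)))))
        ^ ((1 - exp (-H)) * (1 - exp (-(((d - 1 - (i : ℕ) : ℕ)) : ℝ) * H))) :=
  Finset.prod_congr rfl fun i _ =>
    congrArg (fun x => u i * x ^ _) (Tuple.sort_apply_eq_of_monotone _ hσ i)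

lemma monotone_rpow_neg_div_of_antitone {ι : Type*} [Preorder ι] {u lam : ℝ} (hu0 : 0 < u)
    (hu1 : u ≤ 1) (hlam : 0 ≤ lam) {r : ι → ℝ} (hr : ∀ i, 0 < r i) (hanti : Antitone r) :
    Monotone fun i => u ^ (-lam / r i) := fun i j hij => by
  refine rpow_le_rpow_of_exponent_ge hu0 hu1 ?_
  rw [neg_div, neg_div, neg_le_neg_iff]
  exact div_le_div_of_nonneg_left hlam (hr j) (hanti hij)

theorem sibuyaA_diagonal_general
    (d : ℕ) (H lam : ℝ) (hH : 0 < H) (hlam : 0 < lam)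
    (μ : Fin d → ℝ) (hμ : ∀ i, 0 ≤ μ i)
    (u : ℝ) (hu0 : 0 < u) (hu1 : u ≤ 1)
    (σ : Equiv.Perm (Fin d))
    (hσ : Antitone ((fun j => μ j + lam * (1 - Real.exp (-H))) ∘ σ)) :
    sibuyaA d H lam μ (fun _ => u)
      = u ^ ((d : ℝ) - lam * (1 - Real.exp (-H)) *
          ∑ i : Fin d, (1 - Real.exp (-(((d - 1 - (i : ℕ) : ℕ)) : ℝ) * H))
            / (μ (σ i) + lam * (1 - Real.exp (-H)))) := by
  have hE : 0 < 1 - exp (-H) := sub_pos.mpr (exp_lt_one_iff.mpr (neg_lt_zero.mpr hH))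
  have hrate : ∀ j, 0 < μ j + lam * (1 - exp (-H)) := fun j =>
    add_pos_of_nonneg_of_pos (hμ j) (mul_pos hlam hE)
  have hmono := monotone_rpow_neg_div_of_antitone hu0 hu1 hlam.le (fun i => hrate (σ i)) hσ
  have hcard : (d : ℝ) = ∑ _i : Fin d, (1 : ℝ) := by simp
  rw [sibuyaA_eq_prod_of_monotone H lam μ (fun _ => u) hmono, hcard, Finset.mul_sum,
    ← Finset.sum_sub_distrib, rpow_sum_of_pos hu0]
  refine Finset.prod_congr rfl fun i _ => ?_
  nth_rewrite 1 [← rpow_one u]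
  rw [← rpow_mul hu0.le, ← rpow_add hu0]
  congr 1
  ring

/-- The diagonal of the Sibuya copula under assumption (A):
`C(u, …, u) = u^{d − λ(1−e^{−H}) ∑_{i=1}^d (1 − e^{−H(d−i)})/λ_{[i]}}`, where
`λ_{[i]}` is the `i`-th largest of `λ_1, …, λ_d` (recorded via a permutation `σ` that
orders `j ↦ λ_j = μ_j + λ(1 − e^{−H})` decreasingly). -/
theorem sibuyaA_diagonal
    (d : ℕ) (hd : 2 ≤ d) (H lam : ℝ) (hH : 0 < H) (hlam : 0 < lam)
    (μ : Fin d → ℝ) (hμ : ∀ i, 0 ≤ μ i)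
    (u : ℝ) (hu0 : 0 < u) (hu1 : u ≤ 1)
    (σ : Equiv.Perm (Fin d))
    (hσ : Antitone ((fun j => μ j + lam * (1 - Real.exp (-H))) ∘ σ)) :
    sibuyaA d H lam μ (fun _ => u)
      = u ^ ((d : ℝ) - lam * (1 - Real.exp (-H)) *
          ∑ i : Fin d, (1 - Real.exp (-(((d - 1 - (i : ℕ) : ℕ)) : ℝ) * H))
            / (μ (σ i) + lam * (1 - Real.exp (-H)))) :=
  sibuyaA_diagonal_general d H lam hH hlam μ hμ u hu0 hu1 σ hσ
end

section
/- The Sibuya copula under assumption (A) is positive lower orthant dependent: for every u ∈ (0,1]^d one has C(u) ≥ ∏_{i=1}^d u_i. -/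
open scoped BigOperators

/-!
Since `u_j ≤ 1` and `-λ/λ_j ≤ 0`, every `v_j` is at least `1`, whatever the order statistics;
the exponents `(1 - e^{-H})(1 - e^{-H(d-i)})` are nonnegative, so each factor of `C(u)` dominates `u_i`.
-/

open Real

lemma one_le_rpow_neg_div_of_le_one {x a b : ℝ} (hx₀ : 0 < x) (hx₁ : x ≤ 1) (ha : 0 ≤ a)
    (hb : 0 ≤ b) : 1 ≤ x ^ (-a / b) :=
  one_le_rpow_of_pos_of_le_one_of_nonpos hx₀ hx₁ (div_nonpos_of_nonpos_of_nonneg (by linarith) hb)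

lemma one_sub_exp_neg_nonneg {x : ℝ} (hx : 0 ≤ x) : 0 ≤ 1 - exp (-x) :=
  sub_nonneg.2 (exp_le_one_iff.2 (by linarith))

lemma one_sub_exp_neg_nonpos {x : ℝ} (hx : x ≤ 0) : 1 - exp (-x) ≤ 0 :=
  sub_nonpos.2 (one_le_exp (by linarith))

/-- Both factors have the sign of `H`. -/
lemma one_sub_exp_neg_mul_one_sub_exp_neg_mul_nonneg (H : ℝ) {k : ℝ} (hk : 0 ≤ k) :
    0 ≤ (1 - exp (-H)) * (1 - exp (-k * H)) := by
  rw [neg_mul]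
  rcases le_total 0 H with hH | hH
  · exact mul_nonneg (one_sub_exp_neg_nonneg hH) (one_sub_exp_neg_nonneg (mul_nonneg hk hH))
  · exact mul_nonneg_of_nonpos_of_nonpos (one_sub_exp_neg_nonpos hH)
      (one_sub_exp_neg_nonpos (mul_nonpos_of_nonneg_of_nonpos hk hH))

theorem sibuyaA_positive_lower_orthant_dependent_general
    (d : ℕ) (H lam : ℝ) (hH : 0 < H) (hlam : 0 < lam)
    (μ : Fin d → ℝ) (hμ : ∀ i, 0 ≤ μ i)
    (u : Fin d → ℝ) (hu : ∀ i, 0 < u i ∧ u i ≤ 1) :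
    sibuyaA d H lam μ u ≥ ∏ i : Fin d, u i := by
  have hrate : ∀ j, 0 ≤ μ j + lam * (1 - exp (-H)) := fun j =>
    add_nonneg (hμ j) (mul_nonneg hlam.le (one_sub_exp_neg_nonneg hH.le))
  refine Finset.prod_le_prod (fun i _ => (hu i).1.le) fun i _ =>
    le_mul_of_one_le_right (hu i).1.le (one_le_rpow ?_ ?_)
  · exact one_le_rpow_neg_div_of_le_one (hu _).1 (hu _).2 hlam.le (hrate _)
  · exact one_sub_exp_neg_mul_one_sub_exp_neg_mul_nonneg H (Nat.cast_nonneg _)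

/-- The Sibuya copula under assumption (A) is positive lower orthant
dependent: for every `u ∈ (0,1]^d`, `C(u) ≥ ∏_{i=1}^d u_i`. -/
theorem sibuyaA_positive_lower_orthant_dependent
    (d : ℕ) (hd : 2 ≤ d) (H lam : ℝ) (hH : 0 < H) (hlam : 0 < lam)
    (μ : Fin d → ℝ) (hμ : ∀ i, 0 ≤ μ i)
    (u : Fin d → ℝ) (hu : ∀ i, 0 < u i ∧ u i ≤ 1) :
    sibuyaA d H lam μ u ≥ ∏ i : Fin d, u i :=
  sibuyaA_positive_lower_orthant_dependent_general d H lam hH hlam μ hμ u hu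
end

section
/- The Sibuya copula under assumption (A) is max-stable: for every u ∈ (0,1]^d and every s ∈ (0,∞), C(u_1^s, …, u_d^s) = C(u_1, …, u_d)^s. -/
open scoped BigOperators

/-! The power map `x ↦ x ^ s` is monotone on `[0, ∞)`, so it commutes with taking order
statistics; each factor of the copula is then homogeneous of degree `s` in `(u_i, v_{(i)})`. -/

theorem Tuple.comp_sort_comp_of_monotoneOn {α β : Type*} [LinearOrder α] [LinearOrder β] {n : ℕ}
    (f : Fin n → α) {g : α → β} (hg : MonotoneOn g (Set.range f)) :
    (g ∘ f) ∘ Tuple.sort (g ∘ f) = g ∘ f ∘ Tuple.sort f :=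
  (Tuple.comp_sort_eq_comp_iff_monotone.mpr fun _ _ hij =>
    hg ⟨_, rfl⟩ ⟨_, rfl⟩ (Tuple.monotone_sort f hij)).symm

theorem Tuple.rpow_apply_sort {n : ℕ} {v : Fin n → ℝ} (hv : ∀ j, 0 ≤ v j) {s : ℝ} (hs : 0 ≤ s)
    (i : Fin n) :
    v (Tuple.sort (fun j => v j ^ s) i) ^ s = v (Tuple.sort v i) ^ s :=
  congrFun (Tuple.comp_sort_comp_of_monotoneOn v (g := fun x => x ^ s)
    fun _ ⟨j, hj⟩ _ _ hxy => Real.rpow_le_rpow (hj ▸ hv j) hxy hs) i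

theorem Real.rpow_rpow_comm {x : ℝ} (hx : 0 ≤ x) (s t : ℝ) : (x ^ s) ^ t = (x ^ t) ^ s := by
  rw [← Real.rpow_mul hx, mul_comm, Real.rpow_mul hx]

theorem Real.mul_rpow_rpow_comm {x y : ℝ} (hx : 0 ≤ x) (hy : 0 ≤ y) (s t : ℝ) :
    x ^ s * (y ^ s) ^ t = (x * y ^ t) ^ s := by
  rw [Real.mul_rpow hx (Real.rpow_nonneg hy t), ← Real.rpow_mul hy, ← Real.rpow_mul hy,
    mul_comm s t]

noncomputable def orderStatProd {n : ℕ} (v u e : Fin n → ℝ) : ℝ :=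
  ∏ i, u i * v (Tuple.sort v i) ^ e i

theorem orderStatProd_rpow {n : ℕ} {v u : Fin n → ℝ} (hv : ∀ j, 0 ≤ v j) (hu : ∀ j, 0 ≤ u j)
    (e : Fin n → ℝ) {s : ℝ} (hs : 0 ≤ s) :
    orderStatProd (fun j => v j ^ s) (fun j => u j ^ s) e = orderStatProd v u e ^ s := by
  rw [orderStatProd, orderStatProd,
    ← Real.finsetProd_rpow _ _ fun i _ => mul_nonneg (hu i) (Real.rpow_nonneg (hv _) _)]
  refine Finset.prod_congr rfl fun i _ => ?_
  rw [Tuple.rpow_apply_sort hv hs, Real.mul_rpow_rpow_comm (hu i) (hv _)]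

theorem sibuyaA_eq_orderStatProd (d : ℕ) (H lam : ℝ) (μ u : Fin d → ℝ) :
    sibuyaA d H lam μ u =
      orderStatProd (fun j => u j ^ (-lam / (μ j + lam * (1 - Real.exp (-H))))) u
        fun i => (1 - Real.exp (-H)) * (1 - Real.exp (-(((d - 1 - (i : ℕ) : ℕ)) : ℝ) * H)) :=
  rfl

theorem sibuyaA_max_stable_general
    (d : ℕ) (H lam : ℝ)
    (μ : Fin d → ℝ)
    (u : Fin d → ℝ) (hu : ∀ i, 0 < u i ∧ u i ≤ 1)
    (s : ℝ) (hs : 0 < s) :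
    sibuyaA d H lam μ (fun i => u i ^ s) = sibuyaA d H lam μ u ^ s := by
  have hu₀ : ∀ i, 0 ≤ u i := fun i => (hu i).1.le
  have hv : (fun j => (u j ^ s) ^ (-lam / (μ j + lam * (1 - Real.exp (-H))))) =
      fun j => (u j ^ (-lam / (μ j + lam * (1 - Real.exp (-H))))) ^ s :=
    funext fun j => Real.rpow_rpow_comm (hu₀ j) _ _
  rw [sibuyaA_eq_orderStatProd, sibuyaA_eq_orderStatProd, hv,
    orderStatProd_rpow (fun j => Real.rpow_nonneg (hu₀ j) _) hu₀ _ hs.le]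

/-- The Sibuya copula under assumption (A) is max-stable: for every
`u ∈ (0,1]^d` and every `s ∈ (0,∞)`, `C(u_1^s, …, u_d^s) = C(u_1, …, u_d)^s`.
In particular it is an extreme-value copula. -/
theorem sibuyaA_max_stable
    (d : ℕ) (hd : 2 ≤ d) (H lam : ℝ) (hH : 0 < H) (hlam : 0 < lam)
    (μ : Fin d → ℝ) (hμ : ∀ i, 0 ≤ μ i)
    (u : Fin d → ℝ) (hu : ∀ i, 0 < u i ∧ u i ≤ 1)
    (s : ℝ) (hs : 0 < s) :
    sibuyaA d H lam μ (fun i => u i ^ s) = sibuyaA d H lam μ u ^ s :=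
  sibuyaA_max_stable_general d H lam μ u hu s hs
end

section
/- Fix μ_1, …, μ_d ∈ (0,∞) and u ∈ (0,1]^d. Let H_n → ∞ and λ_n → ∞ be sequences in (0,∞), and let C_{H_n, λ_n} denote the Sibuya copula under assumption (A) with parameters (H_n, λ_n, μ_1, …, μ_d). Then C_{H_n, λ_n}(u) → min{u_1, …, u_d} as n → ∞, i.e., in the limit H ↑ ∞, λ ↑ ∞ the copula becomes the upper Fréchet bound copula M(u) = min_i u_i. -/
open scoped BigOperators

open Filter Finset Topology

/-!
Write `C_{H,λ}(u) = (∏ u_i) · exp (∑_i e_i log v_{(i)})` with `e_i = (1 - e^{-H})(1 - e^{-H(d-i)})`.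
As `H → ∞`, `e_i → 1` for `i < d` while `e_d = 0`, and `λ / λ_j → 1` gives `log v_j → -log u_j`.
The sorting permutation changes with `n`, but the order statistics stay bounded, so replacing each
`e_i` by its limit costs `o(1)`; dropping the top order statistic then leaves
`∑_j log v_j - max_j log v_j`, which is continuous in `v`. Hence the exponent tends to
`-∑_j log u_j + log (min_j u_j)` and `C_{H,λ}(u) → min_j u_j`.
-/

theorem apply_last_eq_sup'_of_monotone_comp {α : Type*} [SemilatticeSup α] {m : ℕ}
    {f : Fin (m + 1) → α} {σ : Equiv.Perm (Fin (m + 1))} (hσ : Monotone (f ∘ σ)) :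
    f (σ (Fin.last m)) = univ.sup' univ_nonempty f :=
  le_antisymm (le_sup' f (mem_univ _)) <| sup'_le _ _ fun j _ => by
    simpa using hσ (Fin.le_last (σ.symm j))

theorem tendsto_sum_comp_perm_mul_sub {ι β : Type*} [Fintype ι] {l : Filter β}
    {x e : β → ι → ℝ} {a c : ι → ℝ} (σ : β → Equiv.Perm ι)
    (hx : Tendsto x l (𝓝 a)) (he : Tendsto e l (𝓝 c)) :
    Tendsto (fun n => ∑ i, x n (σ n i) * (e n i - c i)) l (𝓝 0) := by
  have hbdd : IsBoundedUnder (· ≤ ·) l (fun n => ‖x n‖) := hx.norm.isBoundedUnder_le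
  have hterm : ∀ i, Tendsto (fun n => (e n i - c i) * x n (σ n i)) l (𝓝 0) := fun i =>
    (sub_self (c i) ▸ (tendsto_pi_nhds.1 he i).sub_const (c i)).zero_mul_isBoundedUnder_le
      (hbdd.mono_le (Eventually.of_forall fun n => norm_le_pi_norm (x n) (σ n i)))
  simpa [mul_comm] using tendsto_finsetSum univ fun i _ => hterm i

theorem tendsto_sum_comp_sort_mul {β : Type*} {l : Filter β} {m : ℕ}
    {x e : β → Fin (m + 1) → ℝ} {a : Fin (m + 1) → ℝ} {σ : β → Equiv.Perm (Fin (m + 1))}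
    (hx : Tendsto x l (𝓝 a)) (hσ : ∀ n, Monotone (x n ∘ σ n))
    (he : Tendsto e l (𝓝 (Function.update 1 (Fin.last m) 0))) :
    Tendsto (fun n => ∑ i, x n (σ n i) * e n i) l
      (𝓝 (∑ j, a j - univ.sup' univ_nonempty a)) := by
  have hsplit : ∀ n, ∑ i, x n (σ n i) * e n i =
      ∑ i, x n (σ n i) * (e n i - Function.update (1 : Fin (m + 1) → ℝ) (Fin.last m) 0 i) +
        (∑ j, x n j - univ.sup' univ_nonempty (x n)) := by
    intro n
    rw [← apply_last_eq_sup'_of_monotone_comp (hσ n), ← Equiv.sum_comp (σ n) (x n)]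
    simp [mul_sub, Fin.sum_univ_castSucc, Fin.castSucc_ne_last]
  have hsup : Tendsto (fun n => univ.sup' univ_nonempty (x n)) l
      (𝓝 (univ.sup' univ_nonempty a)) :=
    Tendsto.finset_sup'_nhds_apply _ fun j _ => tendsto_pi_nhds.1 hx j
  simpa [hsplit] using (tendsto_sum_comp_perm_mul_sub σ hx he).add
    ((tendsto_finsetSum univ fun j _ => tendsto_pi_nhds.1 hx j).sub hsup)

theorem prod_mul_exp_sum_neg_log_sub_sup' {ι : Type*} [Fintype ι] [Nonempty ι] {u : ι → ℝ}
    (hu : ∀ i, 0 < u i) :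
    (∏ i, u i) * Real.exp (∑ j, -Real.log (u j) -
      univ.sup' univ_nonempty (fun j => -Real.log (u j))) = ⨅ i, u i := by
  obtain ⟨j₀, -, hj₀⟩ := exists_mem_eq_sup' univ_nonempty (fun j => -Real.log (u j))
  have hmin : ⨅ i, u i = u j₀ := by
    refine le_antisymm (ciInf_le (Finite.bddBelow_range u) j₀) (le_ciInf fun j => ?_)
    have := hj₀ ▸ le_sup' (fun j => -Real.log (u j)) (mem_univ j)
    exact (Real.log_le_log_iff (hu j₀) (hu j)).1 (by linarith)
  rw [hmin, hj₀, Real.exp_sub, Real.exp_sum]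
  simp only [Real.exp_neg, Real.exp_log (hu _), prod_inv_distrib]
  have := (prod_pos fun i (_ : i ∈ univ) => hu i).ne'
  field_simp

theorem tendsto_one_sub_exp_neg {β : Type*} {l : Filter β} {H : β → ℝ}
    (hH : Tendsto H l atTop) : Tendsto (fun n => 1 - Real.exp (-H n)) l (𝓝 1) := by
  simpa using tendsto_const_nhds.sub (Real.tendsto_exp_neg_atTop_nhds_zero.comp hH)

/-- The paper's `v_j = u_j ^ (-λ / λ_j)`. -/
noncomputable def sibuyaATransform (H lam : ℝ) {d : ℕ} (μ u : Fin d → ℝ) (j : Fin d) : ℝ :=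
  u j ^ (-lam / (μ j + lam * (1 - Real.exp (-H))))

/-- The exponent of the order statistic `v_{(i+1)}` (indices are 0-based, so the top one,
`i = d - 1`, gets exponent `0`). -/
noncomputable def sibuyaAExponent (d : ℕ) (H : ℝ) (i : Fin d) : ℝ :=
  (1 - Real.exp (-H)) * (1 - Real.exp (-(((d - 1 - (i : ℕ) : ℕ)) : ℝ) * H))

theorem sibuyaATransform_pos {H lam : ℝ} {d : ℕ} (μ : Fin d → ℝ) {u : Fin d → ℝ} {j : Fin d}
    (hu : 0 < u j) : 0 < sibuyaATransform H lam μ u j :=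
  Real.rpow_pos_of_pos hu _

theorem sibuyaA_eq_prod_mul_exp {d : ℕ} {H lam : ℝ} {μ u : Fin d → ℝ} (hu : ∀ i, 0 < u i) :
    sibuyaA d H lam μ u = (∏ i, u i) * Real.exp (∑ i,
      Real.log (sibuyaATransform H lam μ u (Tuple.sort (sibuyaATransform H lam μ u) i)) *
        sibuyaAExponent d H i) := by
  rw [Real.exp_sum, ← prod_mul_distrib]
  refine prod_congr rfl fun i _ => ?_
  rw [← Real.rpow_def_of_pos (sibuyaATransform_pos μ (hu _))]
  rfl

theorem sibuyaAExponent_last (m : ℕ) (H : ℝ) : sibuyaAExponent (m + 1) H (Fin.last m) = 0 := by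
  simp [sibuyaAExponent]

theorem tendsto_sibuyaAExponent {β : Type*} {l : Filter β} {H : β → ℝ}
    (hH : Tendsto H l atTop) (m : ℕ) :
    Tendsto (fun n => sibuyaAExponent (m + 1) (H n)) l
      (𝓝 (Function.update 1 (Fin.last m) 0)) := by
  refine tendsto_pi_nhds.2 (Fin.lastCases ?_ fun i => ?_)
  · simpa [sibuyaAExponent_last] using tendsto_const_nhds
  · have hk : (0 : ℝ) < ((m + 1 - 1 - i : ℕ) : ℝ) := by
      have := i.2
      simp only [Nat.cast_pos]
      omega
    simpa only [sibuyaAExponent, Fin.val_castSucc, neg_mul, Pi.one_apply, mul_one,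
      Function.update_of_ne (Fin.castSucc_ne_last i)] using
      (tendsto_one_sub_exp_neg hH).mul (tendsto_one_sub_exp_neg (hH.const_mul_atTop hk))

theorem tendsto_log_sibuyaATransform {β : Type*} {l : Filter β} {H lam : β → ℝ}
    (hH : Tendsto H l atTop) (hlam : Tendsto lam l atTop) {d : ℕ} (μ : Fin d → ℝ)
    {u : Fin d → ℝ} {j : Fin d} (hu : 0 < u j) :
    Tendsto (fun n => Real.log (sibuyaATransform (H n) (lam n) μ u j)) l
      (𝓝 (-Real.log (u j))) := by
  have hratio : Tendsto (fun n => lam n / (μ j + lam n * (1 - Real.exp (-H n)))) l (𝓝 1) := by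
    have hden : Tendsto (fun n => μ j / lam n + (1 - Real.exp (-H n))) l (𝓝 1) := by
      simpa using (tendsto_const_nhds.div_atTop hlam).add (tendsto_one_sub_exp_neg hH)
    have hinv := hden.inv₀ one_ne_zero
    rw [inv_one] at hinv
    refine hinv.congr' ?_
    filter_upwards [hlam.eventually_ne_atTop 0] with n hn
    rw [div_add' _ _ _ hn, inv_div, mul_comm (1 - _)]
  simp only [sibuyaATransform, Real.log_rpow hu]
  simpa [neg_div] using (hratio.mul_const (Real.log (u j))).neg

theorem sibuyaA_tendsto_frechet_upper_bound_general
    (d : ℕ) (hd : 2 ≤ d)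
    (μ : Fin d → ℝ)
    (u : Fin d → ℝ) (hu : ∀ i, 0 < u i ∧ u i ≤ 1)
    (Hs lams : ℕ → ℝ)
    (hH : Tendsto Hs atTop atTop) (hlam : Tendsto lams atTop atTop) :
    Tendsto (fun n => sibuyaA d (Hs n) (lams n) μ u) atTop (nhds (⨅ i, u i)) := by
  obtain ⟨m, rfl⟩ : ∃ m, d = m + 1 := ⟨d - 1, by omega⟩
  have hu₀ : ∀ i, 0 < u i := fun i => (hu i).1
  have hsorted : ∀ n, Monotone ((fun j => Real.log (sibuyaATransform (Hs n) (lams n) μ u j)) ∘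
      Tuple.sort (sibuyaATransform (Hs n) (lams n) μ u)) := fun n _ _ hij =>
    Real.log_le_log (sibuyaATransform_pos μ (hu₀ _))
      (Tuple.monotone_sort (sibuyaATransform (Hs n) (lams n) μ u) hij)
  have hlog : Tendsto (fun n j => Real.log (sibuyaATransform (Hs n) (lams n) μ u j)) atTop
      (𝓝 fun j => -Real.log (u j)) :=
    tendsto_pi_nhds.2 fun j => tendsto_log_sibuyaATransform hH hlam μ (hu₀ j)
  have hexp := tendsto_sum_comp_sort_mul hlog hsorted (tendsto_sibuyaAExponent hH m)
  rw [← prod_mul_exp_sum_neg_log_sub_sup' hu₀]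
  simp_rw [sibuyaA_eq_prod_mul_exp hu₀]
  exact ((Real.continuous_exp.tendsto _).comp hexp).const_mul _

/-- Fix `μ_1, …, μ_d ∈ (0,∞)` and `u ∈ (0,1]^d`.  For sequences
`H_n → ∞` and `λ_n → ∞` in `(0,∞)`, the Sibuya copulas under assumption (A) with parameters
`(H_n, λ_n, μ_1, …, μ_d)` converge to the upper Fréchet bound:
`C_{H_n, λ_n}(u) → min{u_1, …, u_d}` as `n → ∞`. -/
theorem sibuyaA_tendsto_frechet_upper_bound
    (d : ℕ) (hd : 2 ≤ d)
    (μ : Fin d → ℝ) (hμ : ∀ i, 0 < μ i)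
    (u : Fin d → ℝ) (hu : ∀ i, 0 < u i ∧ u i ≤ 1)
    (Hs lams : ℕ → ℝ) (hHpos : ∀ n, 0 < Hs n) (hlampos : ∀ n, 0 < lams n)
    (hH : Tendsto Hs atTop atTop) (hlam : Tendsto lams atTop atTop) :
    Tendsto (fun n => sibuyaA d (Hs n) (lams n) μ u) atTop (nhds (⨅ i, u i)) :=
  sibuyaA_tendsto_frechet_upper_bound_general d hd μ u hu Hs lams hH hlam
end

section
/- The upper tail-dependence coefficient of the bivariate Sibuya copula under assumption (A) equals min{θ_1, θ_2}: lim_{u ↑ 1} (1 − 2u + C(u, u))/(1 − u) = min{θ_1, θ_2} = (1 − e^{−H})^2 λ / (max{μ_1, μ_2} + λ(1 − e^{−H})), where C(u_1, u_2) = min{u_1^{1−θ_1} u_2, u_1 u_2^{1−θ_2}} with θ_i := (1 − e^{−H})^2 λ/λ_i. -/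
/-!
Along the diagonal the Marshall–Olkin copula is `C(u, u) = u ^ (2 - min θ₁ θ₂)`, and for any
diagonal `δ` with `δ 1 = 1` the tail quotient `(1 - 2u + δ u) / (1 - u)` tends to `2 - δ'(1)` as
`u ↑ 1`, which here is `min θ₁ θ₂`. Since `θᵢ = a / (μᵢ + b)` with `a ≥ 0`, `b > 0`, the smaller
coefficient belongs to the larger `μᵢ`.
-/

open Filter Topology

lemma tendsto_tail_quotient_of_hasDerivAt {δ : ℝ → ℝ} {d : ℝ} (hδ : HasDerivAt δ d 1)
    (hδ1 : δ 1 = 1) :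
    Tendsto (fun u => (1 - 2 * u + δ u) / (1 - u)) (𝓝[<] 1) (𝓝 (2 - d)) := by
  have hg : HasDerivAt (fun u => 1 - 2 * u + δ u) (d - 2) 1 := by
    have hlin : HasDerivAt (fun u : ℝ => 1 - 2 * u) (-2) 1 := by
      simpa using ((hasDerivAt_id (1 : ℝ)).const_mul 2).const_sub 1
    rw [sub_eq_neg_add]
    exact hlin.fun_add hδ
  have hslope := (hasDerivAt_iff_tendsto_slope.mp hg).mono_left
    (nhdsWithin_mono 1 fun _ hu => ne_of_lt hu)
  refine (hslope.neg.congr fun u => ?_).trans (by rw [neg_sub])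
  rw [slope_def_field, hδ1, ← div_neg, neg_sub]
  ring_nf

lemma tendsto_tail_quotient_rpow (θ : ℝ) :
    Tendsto (fun u : ℝ => (1 - 2 * u + u ^ (2 - θ)) / (1 - u)) (𝓝[<] 1) (𝓝 θ) := by
  have hδ : HasDerivAt (fun u : ℝ => u ^ (2 - θ)) (2 - θ) 1 := by
    simpa using Real.hasDerivAt_rpow_const (p := 2 - θ) (Or.inl one_ne_zero)
  simpa using tendsto_tail_quotient_of_hasDerivAt hδ (Real.one_rpow _)

lemma min_rpow_one_sub_mul_self {u : ℝ} (hu₀ : 0 < u) (hu₁ : u ≤ 1) (a b : ℝ) :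
    min (u ^ (1 - a) * u) (u * u ^ (1 - b)) = u ^ (2 - min a b) := by
  rw [← Real.rpow_add_one hu₀.ne', mul_comm, ← Real.rpow_add_one hu₀.ne', ← max_sub_sub_left,
    (Real.antitone_rpow_of_base_le_one hu₀ hu₁).map_max]
  ring_nf

lemma min_div_div_eq_div_max {a x y : ℝ} (ha : 0 ≤ a) (hx : 0 < x) (hy : 0 < y) :
    min (a / x) (a / y) = a / max x y := by
  rcases le_total x y with h | h
  · rw [max_eq_right h, min_eq_right (div_le_div_of_nonneg_left ha hx h)]
  · rw [max_eq_left h, min_eq_left (div_le_div_of_nonneg_left ha hy h)]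

/-- The upper tail-dependence coefficient of the bivariate Sibuya copula
under assumption (A) equals `min{θ_1, θ_2}`:
`lim_{u ↑ 1} (1 − 2u + C(u, u))/(1 − u) = min{θ_1, θ_2}
  = (1 − e^{−H})^2 λ / (max{μ_1, μ_2} + λ(1 − e^{−H}))`, where
`C(u_1, u_2) = min{u_1^{1−θ_1} u_2, u_1 u_2^{1−θ_2}}` is the Marshall–Olkin copula with
`θ_i = (1 − e^{−H})^2 λ/λ_i` and `λ_i = μ_i + λ(1 − e^{−H})`. -/
theorem sibuyaA_bivariate_upper_tail_dependence
    (H lam : ℝ) (hH : 0 < H) (hlam : 0 < lam)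
    (μ₁ μ₂ : ℝ) (hμ₁ : 0 ≤ μ₁) (hμ₂ : 0 ≤ μ₂) :
    Tendsto (fun u : ℝ =>
        (1 - 2 * u +
          min (u ^ (1 - (1 - Real.exp (-H)) ^ 2 * lam / (μ₁ + lam * (1 - Real.exp (-H)))) * u)
              (u * u ^ (1 - (1 - Real.exp (-H)) ^ 2 * lam / (μ₂ + lam * (1 - Real.exp (-H))))))
          / (1 - u))
      (nhdsWithin 1 (Set.Iio (1 : ℝ)))
      (nhds (min ((1 - Real.exp (-H)) ^ 2 * lam / (μ₁ + lam * (1 - Real.exp (-H))))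
                 ((1 - Real.exp (-H)) ^ 2 * lam / (μ₂ + lam * (1 - Real.exp (-H))))))
    ∧ min ((1 - Real.exp (-H)) ^ 2 * lam / (μ₁ + lam * (1 - Real.exp (-H))))
          ((1 - Real.exp (-H)) ^ 2 * lam / (μ₂ + lam * (1 - Real.exp (-H))))
        = (1 - Real.exp (-H)) ^ 2 * lam / (max μ₁ μ₂ + lam * (1 - Real.exp (-H))) := by
  set c : ℝ := 1 - Real.exp (-H)
  have hc : 0 < c := sub_pos.mpr (Real.exp_lt_one_iff.mpr (neg_lt_zero.mpr hH))
  constructor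
  · refine (tendsto_tail_quotient_rpow _).congr' ?_
    filter_upwards [Ioo_mem_nhdsLT zero_lt_one] with u hu
    rw [min_rpow_one_sub_mul_self hu.1 hu.2.le]
  · rw [min_div_div_eq_div_max (by positivity) (by positivity) (by positivity), max_add_add_right]
end

section
/- The lower extremal-dependence coefficient of the Sibuya copula under assumption (A) is zero: lim_{u ↓ 0} C(u, …, u) / (1 − D(u)) = 0, where D(u) := ∑_{I ⊆ {1,…,d}} (−1)^{|I|} C(u^{𝟙_I(1)}, …, u^{𝟙_I(d)}) is the diagonal of the survival copula of C obtained by inclusion–exclusion (here u^{𝟙_I(i)} equals u if i ∈ I and 1 otherwise). -/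
/-! On the vector equal to `u ∈ (0, 1)` on `I` and to `1` elsewhere, the `v_j` with `j ∈ I`
exceed `1` and are sorted into the top `#I` positions. Position `i` then contributes the exponent
`1 - λ/λ_j · (1 - e^{-H})(1 - e^{-H(d-1-i)}) ∈ [e^{-H(d-1-i)}, 1]`, so `C = u ^ E_I` with
`E_I = 1` when `#I = 1` and `E_I ≥ 1 + e^{-H}` when `#I ≥ 2`. Hence `C(u, …, u) / u → 0`, while
in `(1 - D(u)) / u` only the `d` singletons survive and give the limit `d`. -/

open scoped BigOperators

/-- The diagonal `D(u) = Ĉ(1−u, …, 1−u)` of the survival copula of the Sibuya copula `C`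
under assumption (A), obtained by inclusion–exclusion:
`D(u) = ∑_{I ⊆ {1,…,d}} (−1)^{|I|} C(u^{𝟙_I(1)}, …, u^{𝟙_I(d)})`, where `u^{𝟙_I(i)}`
equals `u` if `i ∈ I` and `1` otherwise. -/
noncomputable def sibuyaASurvDiag (d : ℕ) (H lam : ℝ) (μ : Fin d → ℝ) (u : ℝ) : ℝ :=
  ∑ I : Finset (Fin d),
    (-1 : ℝ) ^ I.card * sibuyaA d H lam μ (fun i => if i ∈ I then u else 1)

open Filter

open Finset Topology

theorem Tuple.sort_mem_iff {n : ℕ} {α : Type*} [LinearOrder α] {f : Fin n → α}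
    {s : Finset (Fin n)} (hs : ∀ i ∈ s, ∀ j ∉ s, f j < f i) (k : Fin n) :
    Tuple.sort f k ∈ s ↔ n - #s ≤ k := by
  have hcard : #{i | Tuple.sort f i ∉ s} = n - #s := by
    have : ({i | Tuple.sort f i ∉ s} : Finset (Fin n)) =
        sᶜ.map (Tuple.sort f).symm.toEmbedding := by
      ext i; simp
    rw [this, card_map, card_compl, Fintype.card_fin]
  have hsorted := Fin.lt_card_filter_univ_iff_apply_of_imp (j := k) (fun i => Tuple.sort f i ∉ s)
    fun i j hji hi hj => (hs _ hj _ hi).not_ge (Tuple.monotone_sort f hji)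
  rw [hcard] at hsorted
  rw [← not_lt, hsorted, not_not]

theorem one_sub_div_mul_mem_Icc {m lam x c : ℝ} (hm : 0 ≤ m) (hlam : 0 < lam) (hx : x < 1)
    (hc : c ≤ 1) : 1 - lam / (m + lam * (1 - x)) * ((1 - x) * (1 - c)) ∈ Set.Icc c 1 := by
  have hr : 0 < lam * (1 - x) := mul_pos hlam (by linarith)
  have ht : lam / (m + lam * (1 - x)) * ((1 - x) * (1 - c))
      = lam * (1 - x) / (m + lam * (1 - x)) * (1 - c) := by ring
  have ht0 : 0 ≤ lam * (1 - x) / (m + lam * (1 - x)) := by positivity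
  have ht1 : lam * (1 - x) / (m + lam * (1 - x)) ≤ 1 :=
    div_le_one_of_le₀ (by linarith) (by linarith)
  rw [ht]
  constructor <;> nlinarith

section

variable {d : ℕ} {H lam : ℝ} {μ : Fin d → ℝ}

theorem sibuyaA_indicator_eq_rpow_sum (hH : 0 < H) (hlam : 0 < lam) (hμ : ∀ j, 0 ≤ μ j)
    (I : Finset (Fin d)) {u : ℝ} (hu0 : 0 < u) (hu1 : u < 1) :
    ∃ e : Fin d → ℝ,
      (∀ i : Fin d, e i ∈ Set.Icc (Real.exp (-(((d - 1 - (i : ℕ) : ℕ)) : ℝ) * H)) 1) ∧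
      sibuyaA d H lam μ (fun i => if i ∈ I then u else 1) =
        u ^ ∑ i : Fin d with d - #I ≤ i.val, e i := by
  set rate : Fin d → ℝ := fun j => μ j + lam * (1 - Real.exp (-H))
  set a : Fin d → ℝ := fun i =>
    (1 - Real.exp (-H)) * (1 - Real.exp (-(((d - 1 - (i : ℕ) : ℕ)) : ℝ) * H))
  set w : Fin d → ℝ := fun i => if i ∈ I then u else 1
  set v : Fin d → ℝ := fun j => w j ^ (-lam / rate j)
  set σ := Tuple.sort v
  have hexp_lt_one : Real.exp (-H) < 1 := Real.exp_lt_one_iff.2 (neg_lt_zero.2 hH)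
  have hrate : ∀ j, 0 < rate j := fun j => by
    have := mul_pos hlam (sub_pos.2 hexp_lt_one); simp only [rate]; linarith [hμ j]
  have hv : ∀ j, v j = if j ∈ I then u ^ (-lam / rate j) else 1 := fun j => by
    by_cases hj : j ∈ I <;> simp [v, w, hj]
  have hsep : ∀ i ∈ I, ∀ j ∉ I, v j < v i := fun i hi j hj => by
    rw [hv, hv, if_pos hi, if_neg hj]
    exact Real.one_lt_rpow_of_pos_of_lt_one_of_neg hu0 hu1
      (div_neg_of_neg_of_pos (neg_neg_of_pos hlam) (hrate i))
  have hdecay : ∀ i : Fin d, Real.exp (-(((d - 1 - (i : ℕ) : ℕ)) : ℝ) * H) ≤ 1 := fun i =>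
    Real.exp_le_one_iff.2 (mul_nonpos_of_nonpos_of_nonneg (neg_nonpos.2 (Nat.cast_nonneg _)) hH.le)
  refine ⟨fun i => 1 - lam / rate (σ i) * a i,
    fun i => one_sub_div_mul_mem_Icc (hμ _) hlam hexp_lt_one (hdecay i), ?_⟩
  rw [Real.rpow_sum_of_pos hu0, prod_filter]
  trans ∏ i, w (σ i) * v (σ i) ^ a i
  · change ∏ i, w i * v (σ i) ^ a i = _
    rw [prod_mul_distrib, prod_mul_distrib, Equiv.prod_comp σ w]
  refine prod_congr rfl fun i _ => ?_
  have hpos := Tuple.sort_mem_iff hsep i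
  by_cases hi : σ i ∈ I
  · rw [if_pos (hpos.1 hi), hv, if_pos hi, ← Real.rpow_mul hu0.le, sub_eq_add_neg,
      Real.rpow_add hu0, Real.rpow_one, neg_div, neg_mul]
    simp only [w, if_pos hi]
  · rw [if_neg (hpos.not.1 hi), hv, if_neg hi]
    simp [w, hi]

theorem sibuyaA_nonneg {u : Fin d → ℝ} (hu : ∀ i, 0 ≤ u i) :
    0 ≤ sibuyaA d H lam μ u :=
  prod_nonneg fun i _ => mul_nonneg (hu i) (Real.rpow_nonneg (Real.rpow_nonneg (hu _) _) _)

theorem sibuyaA_indicator_of_card_eq_one (hH : 0 < H) (hlam : 0 < lam) (hμ : ∀ j, 0 ≤ μ j)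
    {I : Finset (Fin d)} (hI : #I = 1) {u : ℝ} (hu0 : 0 < u) (hu1 : u < 1) :
    sibuyaA d H lam μ (fun i => if i ∈ I then u else 1) = u := by
  obtain ⟨e, he, hC⟩ := sibuyaA_indicator_eq_rpow_sum hH hlam hμ I hu0 hu1
  have hd : 1 ≤ d := by simpa [hI] using card_le_univ I
  set top : Fin d := ⟨d - 1, by omega⟩
  have htop : ({i | d - #I ≤ i.val} : Finset (Fin d)) = {top} := by
    ext i
    simp only [hI, mem_filter, mem_univ, true_and, mem_singleton, Fin.ext_iff, top]
    omega
  have he_top : e top = 1 := le_antisymm (he top).2 (by simpa [top] using (he top).1)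
  rw [hC, htop, sum_singleton, he_top, Real.rpow_one]

theorem sibuyaA_indicator_le_of_two_le_card (hH : 0 < H) (hlam : 0 < lam) (hμ : ∀ j, 0 ≤ μ j)
    {I : Finset (Fin d)} (hI : 2 ≤ #I) {u : ℝ} (hu0 : 0 < u) (hu1 : u < 1) :
    sibuyaA d H lam μ (fun i => if i ∈ I then u else 1) ≤ u ^ (1 + Real.exp (-H)) := by
  obtain ⟨e, he, hC⟩ := sibuyaA_indicator_eq_rpow_sum hH hlam hμ I hu0 hu1
  have hd : 2 ≤ d := hI.trans (by simpa using card_le_univ I)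
  set top₁ : Fin d := ⟨d - 1, by omega⟩
  set top₂ : Fin d := ⟨d - 2, by omega⟩
  have hsub : {top₁, top₂} ⊆ ({i | d - #I ≤ i.val} : Finset (Fin d)) := by
    intro i hi
    simp only [mem_insert, mem_singleton] at hi
    rcases hi with rfl | rfl <;> simp only [mem_filter, mem_univ, true_and, top₁, top₂] <;> omega
  have htop₂ : d - 1 - (d - 2) = 1 := by omega
  have hexp_lt_oneonent : 1 + Real.exp (-H) ≤ ∑ i : Fin d with d - #I ≤ i.val, e i :=
    calc 1 + Real.exp (-H) ≤ e top₁ + e top₂ :=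
          add_le_add (by simpa [top₁] using (he top₁).1) (by simpa [top₂, htop₂] using (he top₂).1)
      _ = ∑ i ∈ {top₁, top₂}, e i :=
          (sum_pair (by simp only [ne_eq, Fin.ext_iff, top₁, top₂]; omega)).symm
      _ ≤ _ := sum_le_sum_of_subset_of_nonneg hsub fun i _ _ => (Real.exp_pos _).le.trans (he i).1
  rw [hC]
  exact Real.rpow_le_rpow_of_exponent_ge hu0 hu1.le hexp_lt_oneonent

theorem tendsto_sibuyaA_indicator_div (hH : 0 < H) (hlam : 0 < lam) (hμ : ∀ j, 0 ≤ μ j)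
    {I : Finset (Fin d)} (hI : I.Nonempty) :
    Tendsto (fun u => sibuyaA d H lam μ (fun i => if i ∈ I then u else 1) / u) (𝓝[>] 0)
      (𝓝 (if #I = 1 then 1 else 0)) := by
  have hIoo : ∀ᶠ u in 𝓝[>] (0 : ℝ), u ∈ Set.Ioo 0 1 := Ioo_mem_nhdsGT one_pos
  split_ifs with h1
  · refine tendsto_const_nhds.congr' ?_
    filter_upwards [hIoo] with u hu
    rw [sibuyaA_indicator_of_card_eq_one hH hlam hμ h1 hu.1 hu.2, div_self hu.1.ne']
  have h2 : 2 ≤ #I := by have := hI.card_pos; omega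
  have hpow : Tendsto (fun u : ℝ => u ^ Real.exp (-H)) (𝓝[>] 0) (𝓝 0) := by
    simpa [Real.zero_rpow (Real.exp_pos (-H)).ne'] using
      (Real.continuousAt_rpow_const 0 _ (Or.inr (Real.exp_pos (-H)).le)).tendsto.mono_left
        nhdsWithin_le_nhds
  refine squeeze_zero' ?_ ?_ hpow
  · filter_upwards [hIoo] with u hu
    exact div_nonneg (sibuyaA_nonneg fun i => by split_ifs <;> linarith [hu.1]) hu.1.le
  · filter_upwards [hIoo] with u hu
    rw [div_le_iff₀ hu.1, ← Real.rpow_add_one hu.1.ne', add_comm]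
    exact sibuyaA_indicator_le_of_two_le_card hH hlam hμ h2 hu.1 hu.2

theorem tendsto_one_sub_sibuyaASurvDiag_div (hH : 0 < H) (hlam : 0 < lam) (hμ : ∀ j, 0 ≤ μ j) :
    Tendsto (fun u => (1 - sibuyaASurvDiag d H lam μ u) / u) (𝓝[>] 0) (𝓝 d) := by
  have hsplit : ∀ u, (1 - sibuyaASurvDiag d H lam μ u) / u = ∑ I ∈ univ.erase ∅,
      (-1) ^ (#I + 1) * (sibuyaA d H lam μ (fun i => if i ∈ I then u else 1) / u) := fun u => by
    have hempty : sibuyaA d H lam μ (fun i => if i ∈ (∅ : Finset (Fin d)) then u else 1) = 1 := by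
      simp [sibuyaA]
    rw [sibuyaASurvDiag, ← add_sum_erase _ _ (mem_univ ∅), card_empty, pow_zero, one_mul, hempty,
      sub_add_cancel_left, neg_div, sum_div, ← sum_neg_distrib]
    exact sum_congr rfl fun I _ => by ring
  have hlim := tendsto_finsetSum (univ.erase ∅) fun I hI =>
    (tendsto_sibuyaA_indicator_div hH hlam hμ
      (nonempty_iff_ne_empty.2 (ne_of_mem_erase hI))).const_mul ((-1 : ℝ) ^ (#I + 1))
  have hvalue : ∑ I ∈ univ.erase (∅ : Finset (Fin d)),
      (-1 : ℝ) ^ (#I + 1) * (if #I = 1 then 1 else 0) = d := by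
    rw [sum_erase _ (by simp), sum_congr rfl (g := fun I => if #I = 1 then 1 else 0)
      fun I _ => by split_ifs with h <;> simp [h], sum_boole, ← powerset_univ,
      ← powersetCard_eq_filter, card_powersetCard, card_univ, Fintype.card_fin,
      Nat.choose_one_right]
  simpa only [hsplit, hvalue] using hlim

end

/-- The lower extremal-dependence coefficient of the Sibuya copula under
assumption (A) is zero: `lim_{u ↓ 0} C(u, …, u) / (1 − D(u)) = 0`. -/
theorem sibuyaA_lower_extremal_dependence_zero
    (d : ℕ) (hd : 2 ≤ d) (H lam : ℝ) (hH : 0 < H) (hlam : 0 < lam)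
    (μ : Fin d → ℝ) (hμ : ∀ i, 0 ≤ μ i) :
    Tendsto (fun u : ℝ =>
        sibuyaA d H lam μ (fun _ => u) / (1 - sibuyaASurvDiag d H lam μ u))
      (nhdsWithin 0 (Set.Ioi (0 : ℝ))) (nhds 0) := by
  have hnum : Tendsto (fun u => sibuyaA d H lam μ (fun _ => u) / u) (𝓝[>] 0) (𝓝 0) := by
    have hd1 : d ≠ 1 := by omega
    simpa [hd1] using
      tendsto_sibuyaA_indicator_div hH hlam hμ (univ_nonempty_iff.2 ⟨⟨0, by omega⟩⟩)
  have hratio := hnum.div (tendsto_one_sub_sibuyaASurvDiag_div hH hlam hμ) (by positivity)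
  rw [zero_div] at hratio
  refine hratio.congr' ?_
  filter_upwards [self_mem_nhdsWithin] with u hu
  exact div_div_div_cancel_right₀ (ne_of_gt hu) _ _
end

section
/- Let R ∈ [0,1), r ≥ 0, β > 0, λ̃ > 0, and T > 0, and suppose r + βλ̃ > 0. Define the first-to-default present value FTD_T(s) := (1 − R)(1 − e^{−rT} e^{−βλ̃T}) − ((1 − R)r + s) ∫_0^T e^{−βλ̃ t} e^{−rt} dt. Then FTD_T(s) = 0 if and only if s = (1 − R)·β·λ̃; in particular the fair spread s* = (1 − R)βλ̃ does not depend on T or r. -/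
/-!
With `c = r + βλ̃`, both legs are multiples of `1 - e^{-cT}`: the protection leg is
`(1 - R)(1 - e^{-cT})` and the discounted premium integral is `(1 - e^{-cT}) / c`. Since `cT > 0`
this common factor is nonzero and cancels, leaving `(1 - R) r + s = (1 - R) c`.
-/

open Real

theorem integral_exp_neg_mul_zero_to {c : ℝ} (hc : c ≠ 0) (T : ℝ) :
    ∫ t in (0 : ℝ)..T, exp (-c * t) = (1 - exp (-c * T)) / c := by
  rw [intervalIntegral.integral_comp_mul_left exp (neg_ne_zero.mpr hc), integral_exp,
    mul_zero, exp_zero, smul_eq_mul]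
  field_simp
  ring

theorem one_sub_exp_neg_mul_pos {c T : ℝ} (hcT : 0 < c * T) : 0 < 1 - exp (-c * T) := by
  rw [sub_pos, exp_lt_one_iff]
  linarith

theorem sub_mul_div_eq_zero_iff {a b c D : ℝ} (hc : c ≠ 0) (hD : D ≠ 0) :
    a * D - b * (D / c) = 0 ↔ b = a * c := by
  rw [sub_eq_zero, mul_div_assoc', eq_div_iff hc, mul_right_comm, mul_left_inj' hD, eq_comm]

theorem ftd_fair_spread_general
    (R r β lamTilde T s : ℝ)
    (hT : 0 < T) (hsum : 0 < r + β * lamTilde) :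
    (1 - R) * (1 - Real.exp (-r * T) * Real.exp (-β * lamTilde * T))
        - ((1 - R) * r + s) *
          ∫ t in (0 : ℝ)..T, Real.exp (-β * lamTilde * t) * Real.exp (-r * t) = 0
      ↔ s = (1 - R) * β * lamTilde := by
  set c := r + β * lamTilde
  have hdiscount (t : ℝ) : exp (-β * lamTilde * t) * exp (-r * t) = exp (-c * t) := by
    rw [← exp_add]; congr 1; simp only [c]; ring
  rw [mul_comm (exp (-r * T)), hdiscount, intervalIntegral.integral_congr fun t _ ↦ hdiscount t,
    integral_exp_neg_mul_zero_to hsum.ne',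
    sub_mul_div_eq_zero_iff hsum.ne' (one_sub_exp_neg_mul_pos (mul_pos hsum hT)).ne']
  constructor <;> intro h <;> linarith

/-- Let `R ∈ [0,1)`, `r ≥ 0`, `β > 0`, `λ̃ > 0`, `T > 0` with
`r + βλ̃ > 0`.  The first-to-default present value
`FTD_T(s) = (1 − R)(1 − e^{−rT} e^{−βλ̃T}) − ((1 − R)r + s) ∫_0^T e^{−βλ̃t} e^{−rt} dt`
vanishes if and only if `s = (1 − R)βλ̃`; in particular the fair spread
`s* = (1 − R)βλ̃` depends neither on `T` nor on `r`. -/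
theorem ftd_fair_spread
    (R r β lamTilde T s : ℝ)
    (hR0 : 0 ≤ R) (hR1 : R < 1) (hr : 0 ≤ r) (hβ : 0 < β) (hlam : 0 < lamTilde)
    (hT : 0 < T) (hsum : 0 < r + β * lamTilde) :
    (1 - R) * (1 - Real.exp (-r * T) * Real.exp (-β * lamTilde * T))
        - ((1 - R) * r + s) *
          ∫ t in (0 : ℝ)..T, Real.exp (-β * lamTilde * t) * Real.exp (-r * t) = 0
      ↔ s = (1 - R) * β * lamTilde :=
  ftd_fair_spread_general R r β lamTilde T s hT hsum
end
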